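/- arXiv:2209.14588 — 2 statements merged into one kernel-verified Lean document; each statement's English description precedes it below -/
import Mathlib

section
/- (Lemma 3.6, case (4,6).) For all nonnegative integers r and s, there exists a solution to HWP*(12; 4^r, 6^s) if and only if r + s = 11. -/
/-- A solution to the directed Hamilton–Waterloo problem HWP*(v; m^r, n^s):
a family of `r + s` permutations of `Fin v`, the first `r` of which are
fixed-point-free with all cycles of length `m` (i.e. every point has minimal
period `m`), the last `s` fixed-point-free with all cycles of length `n`,
such that for every ordered pair of distinct vertices `(x, y)` there is exactly
one index `i` with `σ i x = y`. -/
def HWPStarSolution (v m n r s : ℕ) : Prop :=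
  ∃ σ : Fin (r + s) → Equiv.Perm (Fin v),
    (∀ i : Fin (r + s), (i : ℕ) < r → ∀ x : Fin v, Function.minimalPeriod ⇑(σ i) x = m) ∧
    (∀ i : Fin (r + s), r ≤ (i : ℕ) → ∀ x : Fin v, Function.minimalPeriod ⇑(σ i) x = n) ∧
    (∀ x y : Fin v, x ≠ y → ∃! i : Fin (r + s), σ i x = y)

/-!
Fix a vertex `x`. Each 2-factor is fixed-point-free, so it uses exactly one of the `v - 1` arcs
leaving `x`, and the decomposition condition says that `i ↦ σ i x` is a bijection onto these
arcs; hence `r + s = v - 1`. Conversely, once there are `v - 1` 2-factors, it suffices that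
they are pairwise arc-disjoint. For `v = 12` and each `r ≤ 11` we list such 2-factors by their
cycles and check the cycle lengths and arc-disjointness by evaluation.
-/

open Function Equiv

theorem Function.IsPeriodicPt.minimalPeriod_eq {α : Type*} {f : α → α} {x : α} {n : ℕ}
    (hn : 0 < n) (hx : IsPeriodicPt f n x) (hmin : ∀ k < n, 0 < k → ¬IsPeriodicPt f k x) :
    minimalPeriod f x = n :=
  (hx.minimalPeriod_le hn).antisymm <| not_lt.1 fun hlt =>
    hmin _ hlt (hx.minimalPeriod_pos hn) (isPeriodicPt_minimalPeriod f x)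

theorem existsUnique_apply_eq_iff_bijective {ι α : Type*} {σ : ι → α → α} {x : α}
    (hσ : ∀ i, σ i x ≠ x) :
    (∀ y, x ≠ y → ∃! i, σ i x = y) ↔ Bijective fun i => (⟨σ i x, hσ i⟩ : {y // y ≠ x}) := by
  simp only [bijective_iff_existsUnique, Subtype.forall, Subtype.mk.injEq, ne_comm]

namespace HWPStarSolution

variable {v m n r s : ℕ}

theorem add_add_one_eq (hm : m ≠ 1) (hn : n ≠ 1) (hv : 0 < v)
    (h : HWPStarSolution v m n r s) : r + s + 1 = v := by
  obtain ⟨σ, hσm, hσn, hσ⟩ := h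
  let x : Fin v := ⟨0, hv⟩
  have hfix : ∀ i, σ i x ≠ x := fun i hx => by
    have hper := minimalPeriod_eq_one_iff_isFixedPt.2 hx
    rcases lt_or_ge (i : ℕ) r with hi | hi
    · exact hm (hσm i hi x ▸ hper)
    · exact hn (hσn i hi x ▸ hper)
  have hcard := Fintype.card_of_bijective ((existsUnique_apply_eq_iff_bijective hfix).1 (hσ x))
  simp only [Fintype.card_fin, Fintype.card_subtype_compl, Fintype.card_unique] at hcard
  omega

theorem of_injective (hm : 1 < m) (hn : 1 < n) (hv : r + s + 1 = v)
    (σ : Fin (r + s) → Perm (Fin v))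
    (hσm : ∀ i : Fin (r + s), (i : ℕ) < r → ∀ x,
      IsPeriodicPt (σ i) m x ∧ ∀ k < m, 0 < k → ¬IsPeriodicPt (σ i) k x)
    (hσn : ∀ i : Fin (r + s), r ≤ (i : ℕ) → ∀ x,
      IsPeriodicPt (σ i) n x ∧ ∀ k < n, 0 < k → ¬IsPeriodicPt (σ i) k x)
    (hσ : ∀ x, Injective fun i => σ i x) : HWPStarSolution v m n r s := by
  have hfix : ∀ i x, σ i x ≠ x := fun i x => by
    rcases lt_or_ge (i : ℕ) r with hi | hi
    · exact (hσm i hi x).2 1 hm one_pos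
    · exact (hσn i hi x).2 1 hn one_pos
  refine ⟨σ, fun i hi x => (hσm i hi x).1.minimalPeriod_eq (by omega) (hσm i hi x).2,
    fun i hi x => (hσn i hi x).1.minimalPeriod_eq (by omega) (hσn i hi x).2, fun x => ?_⟩
  refine (existsUnique_apply_eq_iff_bijective (hfix · x)).2 ?_
  rw [Fintype.bijective_iff_injective_and_card]
  refine ⟨fun i j hij => hσ x (congrArg Subtype.val hij), ?_⟩
  simp only [Fintype.card_fin, Fintype.card_subtype_compl, Fintype.card_unique]
  omega

end HWPStarSolution

def ofCycles {α : Type*} [DecidableEq α] (cs : List (List α)) : Perm α :=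
  (cs.map List.formPerm).prod

def twoFactors_12_4_6 : (r : ℕ) → r ≤ 11 → Fin (r + (11 - r)) → Perm (Fin 12)
  | 0, _ => ![
      ofCycles [[0, 6, 4, 11, 5, 9], [1, 8, 7, 10, 3, 2]],
      ofCycles [[0, 5, 11, 7, 2, 10], [1, 3, 8, 9, 4, 6]],
      ofCycles [[0, 11, 1, 5, 2, 6], [3, 10, 7, 8, 4, 9]],
      ofCycles [[0, 3, 1, 9, 6, 2], [4, 7, 5, 8, 10, 11]],
      ofCycles [[0, 4, 1, 10, 5, 3], [2, 9, 7, 6, 8, 11]],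
      ofCycles [[0, 8, 6, 7, 1, 11], [2, 5, 10, 4, 3, 9]],
      ofCycles [[0, 7, 4, 2, 8, 5], [1, 6, 3, 11, 9, 10]],
      ofCycles [[0, 2, 4, 10, 8, 1], [3, 6, 5, 7, 9, 11]],
      ofCycles [[0, 9, 5, 1, 4, 8], [2, 3, 7, 11, 6, 10]],
      ofCycles [[0, 10, 9, 1, 2, 7], [3, 4, 5, 6, 11, 8]],
      ofCycles [[0, 1, 7, 3, 5, 4], [2, 11, 10, 6, 9, 8]]]
  | 1, _ => ![
      ofCycles [[0, 6, 11, 3], [1, 5, 9, 8], [2, 4, 10, 7]],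
      ofCycles [[0, 3, 11, 7, 6, 1], [2, 8, 10, 5, 4, 9]],
      ofCycles [[0, 10, 9, 11, 5, 8], [1, 4, 7, 3, 6, 2]],
      ofCycles [[0, 2, 5, 1, 8, 6], [3, 10, 11, 9, 7, 4]],
      ofCycles [[0, 5, 2, 6, 3, 7], [1, 10, 4, 11, 8, 9]],
      ofCycles [[0, 11, 2, 3, 5, 10], [1, 9, 6, 7, 8, 4]],
      ofCycles [[0, 9, 3, 8, 7, 5], [1, 11, 6, 4, 2, 10]],
      ofCycles [[0, 7, 1, 6, 8, 2], [3, 9, 4, 5, 11, 10]],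
      ofCycles [[0, 8, 11, 1, 3, 4], [2, 7, 9, 5, 6, 10]],
      ofCycles [[0, 4, 6, 5, 7, 11], [1, 2, 9, 10, 8, 3]],
      ofCycles [[0, 1, 7, 10, 6, 9], [2, 11, 4, 8, 5, 3]]]
  | 2, _ => ![
      ofCycles [[0, 3, 6, 9], [1, 2, 4, 7], [5, 10, 8, 11]],
      ofCycles [[0, 2, 7, 4], [1, 5, 6, 10], [3, 11, 8, 9]],
      ofCycles [[0, 1, 11, 6, 7, 2], [3, 4, 10, 9, 8, 5]],
      ofCycles [[0, 10, 2, 11, 9, 5], [1, 3, 8, 7, 6, 4]],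
      ofCycles [[0, 7, 8, 10, 6, 1], [2, 5, 4, 9, 11, 3]],
      ofCycles [[0, 9, 2, 3, 1, 10], [4, 8, 6, 5, 7, 11]],
      ofCycles [[0, 4, 5, 8, 3, 7], [1, 6, 2, 9, 10, 11]],
      ofCycles [[0, 6, 8, 2, 10, 3], [1, 9, 4, 11, 7, 5]],
      ofCycles [[0, 8, 4, 2, 6, 11], [1, 7, 3, 10, 5, 9]],
      ofCycles [[0, 11, 10, 7, 9, 6], [1, 4, 3, 5, 2, 8]],
      ofCycles [[0, 5, 11, 2, 1, 8], [3, 9, 7, 10, 4, 6]]]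
  | 3, _ => ![
      ofCycles [[0, 8, 3, 5], [1, 2, 6, 10], [4, 9, 11, 7]],
      ofCycles [[0, 1, 9, 8], [2, 4, 3, 11], [5, 7, 10, 6]],
      ofCycles [[0, 10, 7, 6], [1, 4, 2, 9], [3, 8, 5, 11]],
      ofCycles [[0, 6, 11, 1, 7, 2], [3, 4, 8, 9, 5, 10]],
      ofCycles [[0, 3, 1, 6, 7, 11], [2, 8, 4, 10, 5, 9]],
      ofCycles [[0, 9, 4, 11, 6, 1], [2, 10, 8, 7, 5, 3]],
      ofCycles [[0, 5, 1, 8, 2, 7], [3, 9, 10, 11, 4, 6]],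
      ofCycles [[0, 2, 5, 4, 1, 10], [3, 6, 8, 11, 9, 7]],
      ofCycles [[0, 4, 5, 8, 6, 9], [1, 11, 10, 2, 3, 7]],
      ofCycles [[0, 11, 5, 2, 1, 3], [4, 7, 8, 10, 9, 6]],
      ofCycles [[0, 7, 9, 3, 10, 4], [1, 5, 6, 2, 11, 8]]]
  | 4, _ => ![
      ofCycles [[0, 3, 10, 9], [1, 5, 11, 8], [2, 7, 6, 4]],
      ofCycles [[0, 1, 9, 2], [3, 4, 10, 11], [5, 7, 8, 6]],
      ofCycles [[0, 5, 2, 1], [3, 7, 11, 4], [6, 10, 8, 9]],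
      ofCycles [[0, 9, 8, 7], [1, 2, 11, 10], [3, 5, 4, 6]],
      ofCycles [[0, 6, 2, 4, 7, 10], [1, 8, 3, 9, 11, 5]],
      ofCycles [[0, 2, 8, 11, 7, 3], [1, 10, 5, 6, 9, 4]],
      ofCycles [[0, 10, 7, 1, 11, 6], [2, 5, 8, 4, 9, 3]],
      ofCycles [[0, 4, 11, 2, 6, 8], [1, 7, 9, 5, 10, 3]],
      ofCycles [[0, 7, 5, 3, 6, 11], [1, 4, 8, 10, 2, 9]],
      ofCycles [[0, 8, 5, 9, 10, 4], [1, 6, 7, 2, 3, 11]],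
      ofCycles [[0, 11, 9, 7, 4, 5], [1, 3, 8, 2, 10, 6]]]
  | 5, _ => ![
      ofCycles [[0, 7, 10, 4], [1, 3, 11, 5], [2, 6, 9, 8]],
      ofCycles [[0, 4, 5, 10], [1, 8, 9, 6], [2, 3, 7, 11]],
      ofCycles [[0, 2, 9, 3], [1, 6, 7, 4], [5, 11, 10, 8]],
      ofCycles [[0, 6, 4, 2], [1, 11, 7, 9], [3, 5, 8, 10]],
      ofCycles [[0, 10, 6, 5], [1, 4, 3, 2], [7, 8, 11, 9]],
      ofCycles [[0, 11, 4, 10, 5, 7], [1, 9, 2, 8, 6, 3]],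
      ofCycles [[0, 3, 8, 4, 9, 11], [1, 2, 7, 5, 6, 10]],
      ofCycles [[0, 1, 5, 2, 10, 9], [3, 4, 8, 7, 6, 11]],
      ofCycles [[0, 9, 5, 4, 6, 8], [1, 7, 3, 10, 2, 11]],
      ofCycles [[0, 8, 1, 10, 11, 6], [2, 5, 3, 9, 4, 7]],
      ofCycles [[0, 5, 9, 10, 7, 1], [2, 4, 11, 8, 3, 6]]]
  | 6, _ => ![
      ofCycles [[0, 9, 6, 10], [1, 8, 3, 5], [2, 4, 7, 11]],
      ofCycles [[0, 1, 10, 5], [2, 11, 7, 4], [3, 9, 8, 6]],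
      ofCycles [[0, 4, 9, 11], [1, 2, 3, 10], [5, 6, 7, 8]],
      ofCycles [[0, 2, 6, 4], [1, 9, 10, 3], [5, 11, 8, 7]],
      ofCycles [[0, 10, 8, 2], [1, 7, 6, 11], [3, 4, 5, 9]],
      ofCycles [[0, 8, 1, 6], [2, 5, 7, 10], [3, 11, 9, 4]],
      ofCycles [[0, 7, 3, 6, 5, 8], [1, 4, 11, 10, 9, 2]],
      ofCycles [[0, 11, 3, 8, 9, 7], [1, 5, 2, 10, 4, 6]],
      ofCycles [[0, 6, 2, 9, 5, 3], [1, 11, 4, 8, 10, 7]],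
      ofCycles [[0, 3, 2, 7, 9, 1], [4, 10, 6, 8, 11, 5]],
      ofCycles [[0, 5, 10, 11, 6, 9], [1, 3, 7, 2, 8, 4]]]
  | 7, _ => ![
      ofCycles [[0, 7, 10, 1], [2, 6, 3, 11], [4, 9, 5, 8]],
      ofCycles [[0, 8, 6, 11], [1, 7, 5, 2], [3, 10, 9, 4]],
      ofCycles [[0, 9, 10, 4], [1, 5, 11, 6], [2, 8, 7, 3]],
      ofCycles [[0, 11, 1, 9], [2, 7, 6, 4], [3, 5, 10, 8]],
      ofCycles [[0, 4, 11, 10], [1, 6, 2, 5], [3, 7, 8, 9]],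
      ofCycles [[0, 10, 6, 8], [1, 4, 5, 3], [2, 11, 9, 7]],
      ofCycles [[0, 1, 3, 6], [2, 9, 8, 10], [4, 7, 11, 5]],
      ofCycles [[0, 2, 3, 4, 6, 7], [1, 10, 11, 8, 5, 9]],
      ofCycles [[0, 5, 6, 9, 11, 3], [1, 8, 2, 10, 7, 4]],
      ofCycles [[0, 6, 5, 7, 9, 2], [1, 11, 4, 10, 3, 8]],
      ofCycles [[0, 3, 9, 6, 10, 5], [1, 2, 4, 8, 11, 7]]]
  | 8, _ => ![
      ofCycles [[0, 7, 1, 2], [3, 5, 10, 9], [4, 6, 8, 11]],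
      ofCycles [[0, 8, 10, 1], [2, 6, 5, 3], [4, 9, 11, 7]],
      ofCycles [[0, 6, 4, 7], [1, 10, 8, 2], [3, 9, 5, 11]],
      ofCycles [[0, 3, 7, 9], [1, 11, 5, 8], [2, 4, 10, 6]],
      ofCycles [[0, 9, 2, 10], [1, 5, 6, 11], [3, 4, 8, 7]],
      ofCycles [[0, 10, 5, 4], [1, 3, 8, 9], [2, 11, 6, 7]],
      ofCycles [[0, 2, 9, 6], [1, 7, 8, 5], [3, 11, 10, 4]],
      ofCycles [[0, 11, 8, 3], [1, 6, 9, 4], [2, 5, 7, 10]],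
      ofCycles [[0, 1, 4, 5, 2, 8], [3, 10, 11, 9, 7, 6]],
      ofCycles [[0, 5, 9, 10, 7, 11], [1, 8, 4, 2, 3, 6]],
      ofCycles [[0, 4, 11, 2, 7, 5], [1, 9, 8, 6, 10, 3]]]
  | 9, _ => ![
      ofCycles [[0, 1, 4, 7], [2, 8, 5, 6], [3, 9, 10, 11]],
      ofCycles [[0, 4, 6, 5], [1, 3, 7, 10], [2, 9, 8, 11]],
      ofCycles [[0, 5, 1, 6], [2, 11, 8, 4], [3, 10, 9, 7]],
      ofCycles [[0, 3, 1, 9], [2, 7, 6, 8], [4, 10, 5, 11]],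
      ofCycles [[0, 11, 10, 4], [1, 2, 3, 6], [5, 7, 8, 9]],
      ofCycles [[0, 2, 5, 10], [1, 7, 4, 8], [3, 11, 6, 9]],
      ofCycles [[0, 10, 2, 1], [3, 4, 5, 8], [6, 7, 11, 9]],
      ofCycles [[0, 8, 10, 3], [1, 5, 4, 9], [2, 6, 11, 7]],
      ofCycles [[0, 6, 3, 2], [1, 10, 8, 7], [4, 11, 5, 9]],
      ofCycles [[0, 9, 2, 4, 1, 11], [3, 8, 6, 10, 7, 5]],
      ofCycles [[0, 7, 9, 11, 1, 8], [2, 10, 6, 4, 3, 5]]]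
  | 10, _ => ![
      ofCycles [[0, 5, 4, 9], [1, 3, 11, 6], [2, 8, 7, 10]],
      ofCycles [[0, 4, 3, 2], [1, 7, 6, 8], [5, 11, 9, 10]],
      ofCycles [[0, 2, 4, 5], [1, 9, 3, 10], [6, 7, 11, 8]],
      ofCycles [[0, 11, 2, 3], [1, 5, 7, 4], [6, 9, 8, 10]],
      ofCycles [[0, 6, 10, 7], [1, 2, 5, 9], [3, 4, 8, 11]],
      ofCycles [[0, 8, 5, 1], [2, 9, 11, 7], [3, 6, 4, 10]],
      ofCycles [[0, 1, 4, 6], [2, 10, 11, 5], [3, 8, 9, 7]],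
      ofCycles [[0, 3, 5, 8], [1, 10, 4, 11], [2, 7, 9, 6]],
      ofCycles [[0, 7, 8, 4], [1, 6, 5, 3], [2, 11, 10, 9]],
      ofCycles [[0, 9, 5, 10], [1, 8, 3, 7], [2, 6, 11, 4]],
      ofCycles [[0, 10, 8, 2, 1, 11], [3, 9, 4, 7, 5, 6]]]
  | 11, _ => ![
      ofCycles [[0, 3, 6, 9], [1, 4, 7, 10], [2, 5, 8, 11]],
      ofCycles [[0, 9, 6, 3], [1, 10, 7, 4], [2, 11, 8, 5]],
      ofCycles [[0, 10, 8, 1], [2, 4, 3, 9], [5, 6, 11, 7]],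
      ofCycles [[0, 5, 4, 2], [1, 6, 8, 7], [3, 11, 9, 10]],
      ofCycles [[0, 11, 5, 10], [1, 2, 7, 3], [4, 9, 8, 6]],
      ofCycles [[0, 8, 3, 5], [1, 7, 2, 9], [4, 6, 10, 11]],
      ofCycles [[0, 7, 9, 4], [1, 5, 11, 6], [2, 3, 8, 10]],
      ofCycles [[0, 2, 6, 7], [1, 8, 4, 11], [3, 10, 5, 9]],
      ofCycles [[0, 4, 10, 6], [1, 11, 3, 2], [5, 7, 8, 9]],
      ofCycles [[0, 1, 9, 11], [2, 10, 4, 8], [3, 7, 6, 5]],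
      ofCycles [[0, 6, 2, 8], [1, 3, 4, 5], [7, 11, 10, 9]]]
  | _ + 12, h => absurd h (by omega)

theorem hwpStarSolution_12_4_6_of_add_eq {r s : ℕ} (h : r + s = 11) :
    HWPStarSolution 12 4 6 r s := by
  obtain rfl : s = 11 - r := by omega
  have hr : r ≤ 11 := by omega
  interval_cases r <;>
    exact .of_injective (by norm_num) (by norm_num) rfl (twoFactors_12_4_6 _ (by norm_num))
      (by decide +kernel) (by decide +kernel) (by decide +kernel)

/-- HWP*(12; 4^r, 6^s) has a solution if and only if r + s = 11. -/
theorem hwpStar_12_4_6 (r s : ℕ) :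
    HWPStarSolution 12 4 6 r s ↔ r + s = 11 :=
  ⟨fun h => by have := h.add_add_one_eq (by norm_num) (by norm_num) (by norm_num); omega,
    hwpStarSolution_12_4_6_of_add_eq⟩
end

section
/- (Lemma 4.2, case (3,15).) For all nonnegative integers r and s: if r + s = 14 and r ≠ 13, then there exists a solution to HWP*(15; 3^r, 15^s); conversely, if a solution to HWP*(15; 3^r, 15^s) exists, then r + s = 14. -/
open Function

theorem Function.minimalPeriod_eq_of_properDivisors {α : Type*} {f : α → α} {x : α} {n : ℕ}
    (hn : 0 < n) (hx : IsPeriodicPt f n x) (hd : ∀ d ∈ n.properDivisors, ¬IsPeriodicPt f d x) :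
    minimalPeriod f x = n := by
  by_contra hne
  refine hd _ ?_ (isPeriodicPt_minimalPeriod f x)
  exact Nat.mem_properDivisors.mpr ⟨hx.minimalPeriod_dvd,
    lt_of_le_of_ne (Nat.le_of_dvd hn hx.minimalPeriod_dvd) hne⟩

theorem HWPStarSolution.add_mul_eq_mul_sub {v m n r s : ℕ} (h : HWPStarSolution v m n r s)
    (hm : m ≠ 1) (hn : n ≠ 1) : (r + s) * v = v * v - v := by
  obtain ⟨σ, hσm, hσn, hcover⟩ := h
  have hfree (i : Fin (r + s)) (x : Fin v) : σ i x ≠ x := by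
    intro hx
    have := minimalPeriod_eq_one_iff_isFixedPt.mpr hx
    rcases lt_or_ge (i : ℕ) r with hi | hi
    · exact hm (hσm i hi x ▸ this)
    · exact hn (hσn i hi x ▸ this)
  have hcard := Finset.card_bij (s := (Finset.univ : Finset (Fin (r + s) × Fin v)))
    (t := (Finset.univ : Finset (Fin v)).offDiag)
    (fun p _ => (p.2, σ p.1 p.2)) (fun p _ => by simpa using (hfree p.1 p.2).symm)
    (fun p _ q _ hpq => by
      obtain ⟨hx, hy⟩ := Prod.mk.inj hpq
      obtain ⟨i, -, huniq⟩ := hcover p.2 (σ p.1 p.2) (hfree p.1 p.2).symm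
      exact Prod.ext ((huniq _ rfl).trans (huniq _ (hx ▸ hy.symm)).symm) hx)
    (fun q hq => by
      obtain ⟨i, hi, -⟩ := hcover q.1 q.2 (Finset.mem_offDiag.mp hq).2.2
      exact ⟨(i, q.1), Finset.mem_univ _, Prod.ext rfl hi⟩)
  simpa [Finset.offDiag_card] using hcard

/-- The last conjunct is `∀ x y, x ≠ y → ∃! i, T i x = y` unfolded, so that it is decidable. -/
def IsHWPStarTable (m n r : ℕ) {k v : ℕ} (T : Fin k → Fin v → Fin v) : Prop :=
  (∀ i, Injective (T i)) ∧
    (∀ (i : Fin k) x, let p := if (i : ℕ) < r then m else n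
      IsPeriodicPt (T i) p x ∧ ∀ d ∈ p.properDivisors, ¬IsPeriodicPt (T i) d x) ∧
    ∀ x y, x ≠ y → ∃ i, T i x = y ∧ ∀ j, T j x = y → j = i

instance {m n r k v : ℕ} :
    DecidablePred (IsHWPStarTable m n r : (Fin k → Fin v → Fin v) → Prop) :=
  fun _ => inferInstanceAs (Decidable (_ ∧ _ ∧ _))

theorem IsHWPStarTable.hwpStarSolution {m n r s k v : ℕ} {T : Fin k → Fin v → Fin v}
    (hT : IsHWPStarTable m n r T) (hm : 0 < m) (hn : 0 < n) (hk : r + s = k) :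
    HWPStarSolution v m n r s := by
  subst hk
  obtain ⟨hinj, hper, hcover⟩ := hT
  have hperiod (i : Fin (r + s)) (x : Fin v) :
      minimalPeriod (T i) x = if (i : ℕ) < r then m else n :=
    minimalPeriod_eq_of_properDivisors (by split_ifs <;> assumption) (hper i x).1 (hper i x).2
  exact ⟨fun i => Equiv.ofBijective (T i) (Finite.injective_iff_bijective.mp (hinj i)),
    fun i hi x => (hperiod i x).trans (if_pos hi),
    fun i hi x => (hperiod i x).trans (if_neg hi.not_gt), hcover⟩

def hwpStarTable : ℕ → Fin 14 → Fin 15 → Fin 15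
  | 0 =>
    ![![2, 6, 11, 8, 3, 0, 10, 5, 12, 7, 13, 1, 14, 4, 9],
      ![10, 14, 13, 9, 2, 12, 0, 11, 7, 5, 8, 4, 1, 3, 6],
      ![7, 3, 1, 5, 13, 14, 11, 9, 0, 2, 6, 12, 4, 8, 10],
      ![3, 8, 9, 2, 10, 7, 1, 6, 14, 11, 0, 13, 5, 12, 4],
      ![8, 10, 7, 12, 1, 3, 14, 4, 9, 13, 11, 6, 0, 2, 5],
      ![5, 12, 8, 7, 11, 9, 4, 1, 10, 6, 3, 2, 13, 14, 0],
      ![14, 5, 10, 4, 8, 6, 2, 13, 1, 0, 12, 3, 7, 9, 11],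
      ![12, 9, 6, 0, 7, 1, 13, 10, 4, 14, 5, 8, 2, 11, 3],
      ![13, 4, 12, 10, 14, 11, 3, 0, 5, 1, 2, 9, 8, 6, 7],
      ![4, 11, 14, 6, 12, 2, 5, 3, 13, 8, 7, 0, 9, 10, 1],
      ![1, 2, 3, 13, 0, 10, 9, 8, 11, 4, 14, 5, 6, 7, 12],
      ![9, 0, 5, 11, 6, 13, 7, 12, 2, 10, 4, 14, 3, 1, 8],
      ![11, 13, 4, 1, 5, 8, 12, 14, 6, 3, 9, 7, 10, 0, 2],
      ![6, 7, 0, 14, 9, 4, 8, 2, 3, 12, 1, 10, 11, 5, 13]]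
  | 1 =>
    ![![2, 4, 11, 9, 8, 13, 5, 10, 1, 14, 12, 0, 7, 6, 3],
      ![12, 13, 3, 6, 11, 9, 4, 0, 2, 8, 5, 14, 1, 10, 7],
      ![9, 5, 14, 10, 2, 0, 11, 8, 6, 13, 7, 1, 3, 4, 12],
      ![3, 6, 9, 13, 10, 4, 14, 11, 7, 12, 8, 2, 0, 1, 5],
      ![5, 7, 6, 4, 0, 14, 10, 2, 11, 1, 3, 12, 9, 8, 13],
      ![4, 12, 13, 1, 14, 10, 8, 3, 5, 2, 9, 7, 6, 0, 11],
      ![13, 3, 7, 0, 5, 6, 9, 1, 12, 10, 14, 8, 4, 11, 2],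
      ![1, 11, 12, 5, 3, 7, 2, 13, 14, 6, 0, 4, 8, 9, 10],
      ![6, 14, 8, 12, 7, 11, 3, 5, 10, 0, 1, 9, 13, 2, 4],
      ![14, 10, 0, 7, 13, 12, 1, 6, 9, 4, 11, 5, 2, 3, 8],
      ![10, 8, 1, 11, 9, 2, 7, 4, 3, 5, 6, 13, 14, 12, 0],
      ![7, 2, 10, 14, 12, 8, 13, 9, 0, 3, 4, 6, 11, 5, 1],
      ![8, 0, 5, 2, 6, 1, 12, 14, 4, 11, 13, 3, 10, 7, 9],
      ![11, 9, 4, 8, 1, 3, 0, 12, 13, 7, 2, 10, 5, 14, 6]]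
  | 2 =>
    ![![2, 4, 11, 9, 8, 13, 5, 10, 1, 14, 12, 0, 7, 6, 3],
      ![3, 14, 6, 12, 13, 1, 11, 9, 4, 10, 7, 2, 0, 8, 5],
      ![6, 7, 0, 8, 1, 3, 4, 13, 12, 5, 2, 9, 10, 14, 11],
      ![4, 6, 7, 2, 11, 9, 3, 8, 10, 1, 14, 12, 5, 0, 13],
      ![14, 0, 10, 7, 5, 12, 13, 11, 9, 4, 8, 6, 3, 1, 2],
      ![12, 8, 9, 13, 2, 11, 10, 0, 3, 7, 5, 1, 14, 4, 6],
      ![13, 3, 5, 0, 9, 7, 12, 1, 6, 2, 11, 14, 4, 10, 8],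
      ![10, 2, 3, 11, 6, 14, 8, 12, 5, 0, 4, 13, 1, 9, 7],
      ![11, 9, 14, 1, 10, 4, 2, 3, 0, 8, 6, 5, 13, 7, 12],
      ![5, 10, 4, 6, 0, 8, 9, 14, 7, 12, 13, 3, 2, 11, 1],
      ![8, 12, 13, 14, 7, 6, 0, 2, 11, 3, 1, 10, 9, 5, 4],
      ![1, 11, 12, 10, 14, 2, 7, 5, 13, 6, 0, 4, 8, 3, 9],
      ![7, 13, 1, 5, 3, 10, 14, 4, 2, 11, 9, 8, 6, 12, 0],
      ![9, 5, 8, 4, 12, 0, 1, 6, 14, 13, 3, 7, 11, 2, 10]]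
  | 3 =>
    ![![2, 4, 11, 9, 8, 13, 5, 10, 1, 14, 12, 0, 7, 6, 3],
      ![3, 14, 6, 12, 13, 1, 11, 9, 4, 10, 7, 2, 0, 8, 5],
      ![9, 7, 4, 0, 6, 8, 2, 14, 10, 3, 5, 13, 11, 12, 1],
      ![6, 10, 13, 4, 5, 12, 9, 0, 7, 2, 14, 3, 1, 11, 8],
      ![4, 3, 12, 11, 14, 10, 13, 1, 0, 7, 6, 5, 8, 2, 9],
      ![13, 8, 5, 2, 11, 9, 0, 6, 12, 4, 1, 10, 14, 3, 7],
      ![14, 0, 8, 1, 12, 7, 3, 2, 13, 5, 4, 9, 6, 10, 11],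
      ![10, 9, 3, 7, 1, 11, 14, 13, 2, 12, 8, 6, 5, 4, 0],
      ![7, 6, 1, 13, 10, 0, 12, 3, 5, 11, 2, 8, 9, 14, 4],
      ![8, 5, 7, 10, 3, 14, 1, 11, 6, 13, 9, 12, 4, 0, 2],
      ![12, 11, 9, 14, 0, 4, 8, 5, 3, 6, 13, 7, 2, 1, 10],
      ![1, 12, 14, 6, 2, 3, 7, 8, 9, 0, 11, 4, 10, 5, 13],
      ![11, 13, 10, 5, 7, 2, 4, 12, 14, 8, 0, 1, 3, 9, 6],
      ![5, 2, 0, 8, 9, 6, 10, 4, 11, 1, 3, 14, 13, 7, 12]]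
  | 4 =>
    ![![2, 4, 11, 9, 8, 13, 5, 10, 1, 14, 12, 0, 7, 6, 3],
      ![3, 14, 6, 12, 13, 1, 11, 9, 4, 10, 7, 2, 0, 8, 5],
      ![9, 7, 4, 0, 6, 8, 2, 14, 10, 3, 5, 13, 11, 12, 1],
      ![7, 6, 8, 11, 10, 0, 13, 5, 9, 2, 14, 12, 3, 1, 4],
      ![10, 13, 12, 4, 5, 11, 7, 8, 3, 6, 2, 1, 9, 14, 0],
      ![1, 2, 5, 7, 12, 3, 0, 11, 6, 13, 8, 4, 14, 10, 9],
      ![5, 9, 13, 8, 7, 4, 3, 2, 14, 0, 6, 10, 1, 11, 12],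
      ![6, 0, 7, 10, 14, 12, 4, 3, 11, 1, 13, 9, 8, 5, 2],
      ![13, 3, 14, 6, 2, 10, 12, 1, 0, 4, 11, 8, 5, 9, 7],
      ![14, 8, 9, 13, 11, 2, 1, 4, 7, 12, 3, 5, 10, 0, 6],
      ![4, 12, 10, 2, 3, 9, 8, 0, 5, 11, 1, 14, 6, 7, 13],
      ![11, 10, 1, 5, 9, 6, 14, 12, 13, 7, 0, 3, 2, 4, 8],
      ![12, 5, 0, 14, 1, 7, 10, 13, 2, 8, 9, 6, 4, 3, 11],
      ![8, 11, 3, 1, 0, 14, 9, 6, 12, 5, 4, 7, 13, 2, 10]]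
  | 5 =>
    ![![2, 4, 11, 9, 8, 13, 5, 10, 1, 14, 12, 0, 7, 6, 3],
      ![3, 14, 6, 12, 13, 1, 11, 9, 4, 10, 7, 2, 0, 8, 5],
      ![9, 7, 4, 0, 6, 8, 2, 14, 10, 3, 5, 13, 11, 12, 1],
      ![7, 6, 8, 11, 10, 0, 13, 5, 9, 2, 14, 12, 3, 1, 4],
      ![5, 3, 12, 6, 11, 7, 1, 0, 13, 4, 8, 9, 14, 10, 2],
      ![12, 8, 13, 10, 14, 11, 4, 1, 3, 0, 2, 6, 5, 9, 7],
      ![1, 5, 0, 7, 9, 10, 12, 2, 14, 8, 6, 3, 13, 4, 11],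
      ![8, 13, 10, 2, 12, 4, 0, 3, 11, 7, 1, 14, 6, 5, 9],
      ![6, 0, 7, 4, 1, 3, 14, 11, 5, 13, 9, 8, 10, 2, 12],
      ![4, 10, 14, 8, 3, 12, 9, 6, 7, 5, 0, 1, 2, 11, 13],
      ![13, 12, 1, 5, 2, 14, 8, 4, 0, 6, 11, 7, 9, 3, 10],
      ![11, 9, 3, 1, 7, 2, 10, 8, 6, 12, 13, 5, 4, 14, 0],
      ![10, 2, 9, 14, 5, 6, 7, 13, 12, 11, 3, 4, 1, 0, 8],
      ![14, 11, 5, 13, 0, 9, 3, 12, 2, 1, 4, 10, 8, 7, 6]]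
  | 6 =>
    ![![2, 4, 11, 9, 8, 13, 5, 10, 1, 14, 12, 0, 7, 6, 3],
      ![3, 14, 6, 12, 13, 1, 11, 9, 4, 10, 7, 2, 0, 8, 5],
      ![9, 7, 4, 0, 6, 8, 2, 14, 10, 3, 5, 13, 11, 12, 1],
      ![7, 6, 8, 11, 10, 0, 13, 5, 9, 2, 14, 12, 3, 1, 4],
      ![5, 3, 12, 6, 11, 7, 1, 0, 13, 4, 8, 9, 14, 10, 2],
      ![13, 8, 3, 7, 14, 6, 12, 2, 11, 0, 4, 1, 5, 9, 10],
      ![1, 2, 7, 14, 12, 4, 10, 13, 0, 6, 3, 8, 9, 5, 11],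
      ![11, 12, 10, 5, 2, 14, 0, 8, 3, 1, 13, 4, 6, 7, 9],
      ![10, 11, 9, 4, 5, 2, 14, 6, 7, 12, 1, 3, 8, 0, 13],
      ![6, 10, 13, 1, 0, 12, 9, 3, 5, 7, 2, 14, 4, 11, 8],
      ![12, 13, 5, 10, 9, 3, 7, 1, 14, 8, 11, 6, 2, 4, 0],
      ![8, 0, 14, 2, 7, 10, 4, 11, 6, 13, 9, 5, 1, 3, 12],
      ![4, 5, 1, 13, 3, 9, 8, 12, 2, 11, 0, 7, 10, 14, 6],
      ![14, 9, 0, 8, 1, 11, 3, 4, 12, 5, 6, 10, 13, 2, 7]]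
  | 7 =>
    ![![2, 4, 11, 9, 8, 13, 5, 10, 1, 14, 12, 0, 7, 6, 3],
      ![3, 14, 6, 12, 13, 1, 11, 9, 4, 10, 7, 2, 0, 8, 5],
      ![9, 7, 4, 0, 6, 8, 2, 14, 10, 3, 5, 13, 11, 12, 1],
      ![7, 6, 8, 11, 10, 0, 13, 5, 9, 2, 14, 12, 3, 1, 4],
      ![5, 3, 12, 6, 11, 7, 1, 0, 13, 4, 8, 9, 14, 10, 2],
      ![13, 8, 3, 7, 14, 6, 12, 2, 11, 0, 4, 1, 5, 9, 10],
      ![1, 13, 10, 2, 7, 9, 4, 6, 14, 11, 3, 5, 8, 0, 12],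
      ![14, 12, 5, 10, 2, 3, 0, 13, 7, 1, 9, 4, 6, 11, 8],
      ![12, 9, 7, 8, 3, 11, 10, 1, 6, 5, 0, 14, 2, 4, 13],
      ![11, 5, 1, 4, 0, 12, 14, 3, 2, 8, 13, 6, 10, 7, 9],
      ![10, 11, 9, 14, 1, 2, 7, 12, 5, 13, 6, 8, 4, 3, 0],
      ![8, 0, 14, 1, 5, 10, 9, 4, 12, 7, 11, 3, 13, 2, 6],
      ![4, 2, 0, 13, 12, 14, 8, 11, 3, 6, 1, 10, 9, 5, 7],
      ![6, 10, 13, 5, 9, 4, 3, 8, 0, 12, 2, 7, 1, 14, 11]]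
  | 8 =>
    ![![2, 4, 11, 9, 8, 13, 5, 10, 1, 14, 12, 0, 7, 6, 3],
      ![3, 14, 6, 12, 13, 1, 11, 9, 4, 10, 7, 2, 0, 8, 5],
      ![9, 7, 4, 0, 6, 8, 2, 14, 10, 3, 5, 13, 11, 12, 1],
      ![7, 6, 8, 11, 10, 0, 13, 5, 9, 2, 14, 12, 3, 1, 4],
      ![5, 3, 12, 6, 11, 7, 1, 0, 13, 4, 8, 9, 14, 10, 2],
      ![13, 8, 3, 7, 14, 6, 12, 2, 11, 0, 4, 1, 5, 9, 10],
      ![1, 13, 10, 2, 7, 9, 4, 6, 14, 11, 3, 5, 8, 0, 12],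
      ![4, 0, 7, 10, 1, 12, 14, 13, 6, 5, 11, 3, 9, 2, 8],
      ![12, 11, 1, 8, 5, 10, 3, 4, 2, 6, 0, 7, 13, 14, 9],
      ![10, 2, 5, 14, 0, 4, 7, 1, 12, 13, 9, 8, 6, 3, 11],
      ![6, 5, 9, 1, 3, 11, 10, 12, 0, 8, 13, 14, 2, 4, 7],
      ![8, 9, 14, 13, 2, 3, 0, 11, 5, 12, 1, 10, 4, 7, 6],
      ![11, 10, 13, 4, 12, 14, 9, 8, 3, 7, 2, 6, 1, 5, 0],
      ![14, 12, 0, 5, 9, 2, 8, 3, 7, 1, 6, 4, 10, 11, 13]]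
  | 9 =>
    ![![2, 4, 11, 9, 8, 13, 5, 10, 1, 14, 12, 0, 7, 6, 3],
      ![3, 14, 6, 12, 13, 1, 11, 9, 4, 10, 7, 2, 0, 8, 5],
      ![9, 7, 4, 0, 6, 8, 2, 14, 10, 3, 5, 13, 11, 12, 1],
      ![7, 6, 8, 11, 10, 0, 13, 5, 9, 2, 14, 12, 3, 1, 4],
      ![5, 3, 12, 6, 11, 7, 1, 0, 13, 4, 8, 9, 14, 10, 2],
      ![13, 8, 3, 7, 14, 6, 12, 2, 11, 0, 4, 1, 5, 9, 10],
      ![1, 13, 10, 2, 7, 9, 4, 6, 14, 11, 3, 5, 8, 0, 12],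
      ![4, 0, 7, 10, 1, 12, 14, 13, 6, 5, 11, 3, 9, 2, 8],
      ![12, 10, 13, 14, 0, 2, 3, 11, 7, 1, 9, 8, 4, 5, 6],
      ![10, 12, 1, 13, 9, 4, 8, 3, 5, 7, 2, 14, 6, 11, 0],
      ![11, 9, 0, 5, 12, 14, 7, 8, 3, 6, 1, 10, 2, 4, 13],
      ![8, 11, 14, 1, 5, 10, 0, 4, 2, 12, 6, 7, 13, 3, 9],
      ![6, 2, 5, 8, 3, 11, 9, 1, 12, 13, 0, 4, 10, 14, 7],
      ![14, 5, 9, 4, 2, 3, 10, 12, 0, 8, 13, 6, 1, 7, 11]]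
  | 10 =>
    ![![2, 4, 11, 9, 8, 13, 5, 10, 1, 14, 12, 0, 7, 6, 3],
      ![3, 14, 6, 12, 13, 1, 11, 9, 4, 10, 7, 2, 0, 8, 5],
      ![9, 7, 4, 0, 6, 8, 2, 14, 10, 3, 5, 13, 11, 12, 1],
      ![7, 6, 8, 11, 10, 0, 13, 5, 9, 2, 14, 12, 3, 1, 4],
      ![5, 3, 12, 6, 11, 7, 1, 0, 13, 4, 8, 9, 14, 10, 2],
      ![13, 8, 3, 7, 14, 6, 12, 2, 11, 0, 4, 1, 5, 9, 10],
      ![1, 13, 10, 2, 7, 9, 4, 6, 14, 11, 3, 5, 8, 0, 12],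
      ![4, 0, 7, 10, 1, 12, 14, 13, 6, 5, 11, 3, 9, 2, 8],
      ![12, 10, 13, 14, 0, 2, 3, 11, 7, 1, 9, 8, 4, 5, 6],
      ![8, 11, 0, 4, 5, 3, 7, 12, 2, 13, 1, 10, 6, 14, 9],
      ![6, 2, 9, 1, 3, 11, 8, 4, 5, 12, 0, 14, 10, 7, 13],
      ![11, 5, 14, 13, 12, 10, 9, 1, 3, 8, 6, 7, 2, 4, 0],
      ![14, 12, 1, 5, 9, 4, 10, 8, 0, 7, 2, 6, 13, 3, 11],
      ![10, 9, 5, 8, 2, 14, 0, 3, 12, 6, 13, 4, 1, 11, 7]]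
  | 11 =>
    ![![2, 4, 11, 9, 8, 13, 5, 10, 1, 14, 12, 0, 7, 6, 3],
      ![3, 14, 6, 12, 13, 1, 11, 9, 4, 10, 7, 2, 0, 8, 5],
      ![9, 7, 4, 0, 6, 8, 2, 14, 10, 3, 5, 13, 11, 12, 1],
      ![7, 6, 8, 11, 10, 0, 13, 5, 9, 2, 14, 12, 3, 1, 4],
      ![5, 3, 12, 6, 11, 7, 1, 0, 13, 4, 8, 9, 14, 10, 2],
      ![13, 8, 3, 7, 14, 6, 12, 2, 11, 0, 4, 1, 5, 9, 10],
      ![1, 13, 10, 2, 7, 9, 4, 6, 14, 11, 3, 5, 8, 0, 12],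
      ![4, 0, 7, 10, 1, 12, 14, 13, 6, 5, 11, 3, 9, 2, 8],
      ![12, 10, 13, 14, 0, 2, 3, 11, 7, 1, 9, 8, 4, 5, 6],
      ![8, 11, 0, 5, 3, 4, 7, 12, 2, 13, 1, 10, 6, 14, 9],
      ![10, 12, 1, 8, 9, 3, 0, 4, 5, 7, 6, 14, 2, 11, 13],
      ![6, 5, 14, 1, 2, 11, 9, 8, 3, 12, 13, 4, 10, 7, 0],
      ![11, 9, 5, 13, 12, 14, 10, 3, 0, 8, 2, 6, 1, 4, 7],
      ![14, 2, 9, 4, 5, 10, 8, 1, 12, 6, 0, 7, 13, 3, 11]]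
  | 12 =>
    ![![2, 4, 11, 9, 8, 13, 5, 10, 1, 14, 12, 0, 7, 6, 3],
      ![3, 14, 6, 12, 13, 1, 11, 9, 4, 10, 7, 2, 0, 8, 5],
      ![9, 7, 4, 0, 6, 8, 2, 14, 10, 3, 5, 13, 11, 12, 1],
      ![7, 6, 8, 11, 10, 0, 13, 5, 9, 2, 14, 12, 3, 1, 4],
      ![5, 3, 12, 6, 11, 7, 1, 0, 13, 4, 8, 9, 14, 10, 2],
      ![13, 8, 3, 7, 14, 6, 12, 2, 11, 0, 4, 1, 5, 9, 10],
      ![1, 13, 10, 2, 7, 9, 4, 6, 14, 11, 3, 5, 8, 0, 12],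
      ![4, 0, 7, 10, 1, 14, 9, 13, 5, 12, 11, 3, 6, 2, 8],
      ![10, 5, 13, 1, 2, 3, 0, 11, 12, 8, 6, 14, 9, 4, 7],
      ![12, 11, 9, 14, 0, 2, 7, 8, 6, 5, 1, 10, 4, 3, 13],
      ![6, 12, 1, 8, 5, 11, 10, 3, 7, 13, 0, 4, 2, 14, 9],
      ![8, 10, 0, 5, 3, 4, 14, 12, 2, 1, 9, 6, 13, 7, 11],
      ![14, 2, 5, 4, 9, 12, 3, 1, 0, 7, 13, 8, 10, 11, 6],
      ![11, 9, 14, 13, 12, 10, 8, 4, 3, 6, 2, 7, 1, 5, 0]]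
  | _ => -- r = 14
    ![![2, 4, 11, 9, 8, 13, 5, 10, 1, 14, 12, 0, 7, 6, 3],
      ![11, 8, 0, 14, 1, 6, 13, 12, 4, 3, 7, 2, 10, 5, 9],
      ![3, 14, 6, 12, 13, 1, 7, 2, 9, 10, 8, 4, 0, 11, 5],
      ![12, 5, 7, 0, 11, 14, 2, 6, 10, 8, 9, 13, 3, 4, 1],
      ![5, 2, 10, 8, 14, 7, 4, 0, 11, 12, 1, 3, 13, 9, 6],
      ![7, 10, 1, 11, 6, 0, 14, 5, 3, 13, 2, 8, 9, 12, 4],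
      ![13, 0, 4, 10, 9, 3, 12, 14, 6, 2, 5, 7, 8, 1, 11],
      ![1, 13, 9, 5, 2, 10, 8, 11, 12, 4, 3, 14, 6, 0, 7],
      ![8, 7, 13, 2, 5, 12, 10, 9, 14, 1, 11, 6, 4, 3, 0],
      ![14, 9, 3, 13, 12, 4, 11, 1, 0, 7, 6, 10, 5, 2, 8],
      ![4, 3, 12, 6, 10, 9, 1, 13, 7, 11, 0, 5, 14, 8, 2],
      ![10, 6, 14, 1, 0, 11, 3, 8, 13, 5, 4, 9, 2, 7, 12],
      ![6, 11, 5, 7, 3, 8, 9, 4, 2, 0, 13, 12, 1, 14, 10],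
      ![9, 12, 8, 4, 7, 2, 0, 3, 5, 6, 14, 1, 11, 10, 13]]

theorem isHWPStarTable_hwpStarTable :
    ∀ r < 15, r ≠ 13 → IsHWPStarTable 3 15 r (hwpStarTable r) := by
  decide +kernel

/-- Lemma 4.2, case (3,15): if r + s = 14 and r ≠ 13 then
HWP*(15; 3^r, 15^s) has a solution; conversely any solution forces r + s = 14. -/
theorem hwpStar_15_3_15 (r s : ℕ) :
    (r + s = 14 ∧ r ≠ 13 → HWPStarSolution 15 3 15 r s) ∧
    (HWPStarSolution 15 3 15 r s → r + s = 14) := by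
  refine ⟨fun ⟨h14, h13⟩ => ?_, fun h => ?_⟩
  · exact (isHWPStarTable_hwpStarTable r (by omega) h13).hwpStarSolution
      (by norm_num) (by norm_num) h14
  · have := h.add_mul_eq_mul_sub (by norm_num) (by norm_num)
    omega
end
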